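/- Let f, g : S^{n-1} → R be 1-Lipschitz functions with values bounded in absolute value by 1. Then there is a constant C depending only on n such that the sup-norm of f - g is at most C times the L²-norm of f - g raised to the power 2/(n+1). -/

import Mathlib

/-!
Let `a = |f x - g x|`. Since `f - g` is `2`-Lipschitz, `|f - g| ≥ a / 2` on the spherical cap of
radius `a / 4` about `x`. That cap has measure `≳ a ^ (n - 1)`: the cone over it contains about
`1 / a` disjoint Euclidean balls of radius `a / 32` strung along the segment from `x / 2` to `x`,
each of volume `≳ a ^ n`. Hence `‖f - g‖₂² ≳ a ^ (n + 1)`.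
-/

open MeasureTheory Metric Set Module
open scoped Pointwise NNReal

lemma sq_sub_mul_measureReal_ball_le_integral_sq {X : Type*} [PseudoMetricSpace X]
    [MeasurableSpace X] [OpensMeasurableSpace X] {μ : Measure X} [IsFiniteMeasure μ]
    {h : X → ℝ} {K : ℝ≥0} (hh : LipschitzWith K h) (hint : Integrable (fun y ↦ h y ^ 2) μ)
    (x : X) {r : ℝ} (hr : K * r ≤ |h x|) :
    (|h x| - K * r) ^ 2 * μ.real (ball x r) ≤ ∫ y, h y ^ 2 ∂μ := by
  have hball (y : X) (hy : y ∈ ball x r) : (|h x| - K * r) ^ 2 ≤ h y ^ 2 := by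
    have hdist : |h x - h y| ≤ K * r := by
      rw [← Real.dist_eq]
      exact (hh.dist_le_mul x y).trans
        (by gcongr; rw [dist_comm]; exact (mem_ball.1 hy).le)
    rw [← sq_abs (h y)]
    gcongr
    linarith [abs_sub_abs_le_abs_sub (h x) (h y)]
  calc (|h x| - K * r) ^ 2 * μ.real (ball x r) ≤ ∫ y in ball x r, h y ^ 2 ∂μ :=
        setIntegral_ge_of_const_le_real measurableSet_ball (measure_ne_top μ _) hball
          hint.integrableOn
    _ ≤ ∫ y, h y ^ 2 ∂μ := setIntegral_le_integral hint (.of_forall fun y ↦ sq_nonneg _)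

lemma le_rpow_of_mul_pow_le {a c I : ℝ} {m : ℕ} (ha : 0 ≤ a) (hc : 0 < c) (hm : m ≠ 0)
    (h : c * a ^ m ≤ I) : a ≤ (1 / c) ^ (1 / (m : ℝ)) * I ^ (1 / (m : ℝ)) := by
  have hI : 0 ≤ I := le_trans (by positivity) h
  rw [← Real.mul_rpow (by positivity) hI, one_div_mul_eq_div, one_div,
    Real.le_rpow_inv_iff_of_pos ha (by positivity) (by positivity), Real.rpow_natCast,
    le_div_iff₀' hc]
  exact h

section Sphere

variable {E : Type*} [NormedAddCommGroup E] [NormedSpace ℝ E]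

lemma norm_inv_norm_smul_sub_le {x z : E} (hx : ‖x‖ = 1) (hz : z ≠ 0) {c : ℝ} (hc : 0 < c) :
    ‖‖z‖⁻¹ • z - x‖ ≤ 2 * ‖z - c • x‖ / c := by
  have hz' : 0 < ‖z‖ := norm_pos_iff.2 hz
  have radial : ‖‖z‖⁻¹ • z - c⁻¹ • z‖ = |c - ‖z‖| / c := by
    rw [← sub_smul, norm_smul, Real.norm_eq_abs, inv_sub_inv hz'.ne' hc.ne', abs_div,
      abs_of_pos (mul_pos hz' hc)]
    field_simp
  have angular : ‖c⁻¹ • z - x‖ = ‖z - c • x‖ / c := by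
    rw [show c⁻¹ • z - x = c⁻¹ • (z - c • x) by rw [smul_sub, inv_smul_smul₀ hc.ne'],
      norm_smul, Real.norm_of_nonneg (inv_nonneg.2 hc.le), inv_mul_eq_div]
  have hcz : |c - ‖z‖| ≤ ‖z - c • x‖ := by
    simpa [norm_smul, hx, abs_of_pos hc, abs_sub_comm] using abs_norm_sub_norm_le z (c • x)
  calc ‖‖z‖⁻¹ • z - x‖ ≤ ‖‖z‖⁻¹ • z - c⁻¹ • z‖ + ‖c⁻¹ • z - x‖ :=
        norm_sub_le_norm_sub_add_norm_sub _ _ _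
    _ = (|c - ‖z‖| + ‖z - c • x‖) / c := by rw [radial, angular, add_div]
    _ ≤ 2 * ‖z - c • x‖ / c := by gcongr; linarith

lemma ball_smul_subset_Ioo_smul_image_ball (x : sphere (0 : E) 1) {c ρ r : ℝ} (hc : 0 < c)
    (hρc : ρ ≤ c) (hcρ : c + ρ ≤ 1) (hρr : 2 * ρ ≤ c * r) :
    ball (c • (x : E)) ρ ⊆ Ioo (0 : ℝ) 1 • ((↑) '' ball x r) := by
  intro z hz
  rw [mem_ball, dist_eq_norm] at hz
  have hcx : ‖c • (x : E)‖ = c := by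
    rw [norm_smul, norm_eq_of_mem_sphere x, mul_one, Real.norm_of_nonneg hc.le]
  have hz_pos : 0 < ‖z‖ := by
    linarith [norm_sub_norm_le (c • (x : E)) z, norm_sub_rev (c • (x : E)) z]
  have hz_lt : ‖z‖ < 1 := by linarith [norm_sub_norm_le z (c • (x : E))]
  have hz0 : z ≠ 0 := norm_pos_iff.1 hz_pos
  have hy : ‖z‖⁻¹ • z ∈ sphere (0 : E) 1 :=
    mem_sphere_zero_iff_norm.2 (norm_smul_inv_norm (𝕜 := ℝ) hz0)
  refine ⟨‖z‖, ⟨hz_pos, hz_lt⟩, ‖z‖⁻¹ • z, ⟨⟨_, hy⟩, ?_, rfl⟩, smul_inv_smul₀ hz_pos.ne' z⟩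
  rw [mem_ball, Subtype.dist_eq, dist_eq_norm]
  calc ‖‖z‖⁻¹ • z - x‖ ≤ 2 * ‖z - c • (x : E)‖ / c :=
        norm_inv_norm_smul_sub_le (norm_eq_of_mem_sphere x) hz0 hc
    _ < 2 * ρ / c := by gcongr
    _ ≤ r := by rwa [div_le_iff₀' hc]

lemma pairwise_disjoint_ball_smul {x : E} (hx : ‖x‖ = 1) (a : ℝ) {ρ : ℝ} (hρ : 0 ≤ ρ) :
    Pairwise (Function.onFun Disjoint fun k : ℕ ↦ ball ((a + 2 * k * ρ) • x) ρ) := by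
  intro j k hjk
  apply ball_disjoint_ball
  have hjk' : (1 : ℝ) ≤ |(j : ℝ) - k| := by
    have : (1 : ℤ) ≤ |(j : ℤ) - k| := Int.one_le_abs (by omega)
    exact_mod_cast this
  rw [dist_eq_norm, ← sub_smul, norm_smul, hx, mul_one, Real.norm_eq_abs,
    show a + 2 * j * ρ - (a + 2 * k * ρ) = (2 * ρ) * (j - k) by ring, abs_mul,
    abs_of_nonneg (by positivity)]
  nlinarith

variable [FiniteDimensional ℝ E] [Nontrivial E] [MeasurableSpace E] [BorelSpace E]
  (μ : Measure E) [μ.IsAddHaarMeasure]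

theorem le_toSphere_real_ball (x : sphere (0 : E) 1) {r : ℝ} (hr : 0 < r) (hr2 : r ≤ 2) :
    μ.real (ball 0 1) / 8 ^ finrank ℝ E * r ^ (finrank ℝ E - 1) ≤ μ.toSphere.real (ball x r) := by
  set d := finrank ℝ E
  set ρ := r / 8 with hρ
  set K := ⌈1 / r⌉₊
  set B : ℕ → Set E := fun k ↦ ball ((1 / 2 + 2 * k * ρ) • (x : E)) ρ
  set cone := Ioo (0 : ℝ) 1 • ((↑) '' ball x r : Set E)
  have hKr : 1 ≤ K * r := by rw [← div_le_iff₀ hr]; exact Nat.le_ceil _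
  have hKr' : K * r < 1 + r := by
    rw [← lt_div_iff₀ hr, add_div, div_self hr.ne']
    linarith [Nat.ceil_lt_add_one (one_div_nonneg.2 hr.le)]
  have hB_sub : ⋃ k ∈ Finset.range K, B k ⊆ cone := by
    refine iUnion₂_subset fun k hk ↦ ball_smul_subset_Ioo_smul_image_ball x
      (by positivity) (by linarith [show 0 ≤ 2 * k * ρ by positivity]) ?_
      (by nlinarith [show 0 ≤ 2 * k * ρ * r by positivity])
    have hk : (k : ℝ) + 1 ≤ K := by exact_mod_cast Finset.mem_range.1 hk
    nlinarith [mul_le_mul_of_nonneg_right hk hr.le]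
  have hB_meas : μ.real (⋃ k ∈ Finset.range K, B k) = K * (ρ ^ d * μ.real (ball 0 1)) := by
    rw [measureReal_biUnion_finset
      ((pairwise_disjoint_ball_smul (norm_eq_of_mem_sphere x) _ (by positivity)).set_pairwise _)
      (fun _ _ ↦ measurableSet_ball)]
    have hball (k : ℕ) : μ.real (B k) = ρ ^ d * μ.real (ball 0 1) := by
      simp [B, measureReal_def, μ.addHaar_ball_of_pos _ (show 0 < ρ by positivity),
        ENNReal.toReal_ofReal (show 0 ≤ ρ ^ d by positivity), d]
    exact (Finset.sum_congr rfl fun k _ ↦ hball k).trans (by simp)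
  have hsphere : μ.toSphere (ball x r) = d * μ cone := μ.toSphere_apply' measurableSet_ball
  have hcone : μ cone ≠ ⊤ := fun h ↦ measure_ne_top μ.toSphere (ball x r) <| by
    rw [hsphere, h, ENNReal.mul_top (by simp [d, finrank_pos.ne'])]
  have hd : r ^ d = r ^ (d - 1) * r := by rw [← pow_succ, Nat.sub_add_cancel finrank_pos]
  calc μ.real (ball 0 1) / 8 ^ d * r ^ (d - 1)
      ≤ (K * r) * (μ.real (ball 0 1) / 8 ^ d * r ^ (d - 1)) :=
        le_mul_of_one_le_left (by positivity) hKr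
    _ = K * (ρ ^ d * μ.real (ball 0 1)) := by rw [div_pow, hd]; ring
    _ = μ.real (⋃ k ∈ Finset.range K, B k) := hB_meas.symm
    _ ≤ μ.real cone := measureReal_mono hB_sub hcone
    _ ≤ d * μ.real cone :=
        le_mul_of_one_le_left measureReal_nonneg (by exact_mod_cast finrank_pos)
    _ = μ.toSphere.real (ball x r) := by simp [measureReal_def, hsphere]

theorem mul_abs_pow_le_integral_sq_toSphere {h : sphere (0 : E) 1 → ℝ} (hh : LipschitzWith 2 h)
    (x : sphere (0 : E) 1) (hx : |h x| ≤ 2) :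
    μ.real (ball 0 1) / 32 ^ finrank ℝ E * |h x| ^ (finrank ℝ E + 1) ≤
      ∫ y, h y ^ 2 ∂μ.toSphere := by
  have hint : Integrable (fun y ↦ h y ^ 2) μ.toSphere :=
    (hh.continuous.pow 2).integrable_of_hasCompactSupport (.of_compactSpace _)
  rcases (abs_nonneg (h x)).eq_or_lt with ha | ha
  · rw [← ha, zero_pow (Nat.succ_ne_zero _), mul_zero]
    exact integral_nonneg fun y ↦ sq_nonneg _
  set a := |h x|
  obtain ⟨m, hm⟩ : ∃ m, finrank ℝ E = m + 1 := ⟨_, (Nat.succ_pred_eq_of_pos finrank_pos).symm⟩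
  calc μ.real (ball 0 1) / 32 ^ finrank ℝ E * a ^ (finrank ℝ E + 1)
      = (a - 2 * (a / 4)) ^ 2 * (μ.real (ball 0 1) / 8 ^ finrank ℝ E *
          (a / 4) ^ (finrank ℝ E - 1)) := by
        rw [hm, Nat.add_sub_cancel, div_pow a, show (32 : ℝ) = 8 * 4 by norm_num, mul_pow]
        field_simp
        ring
    _ ≤ (a - 2 * (a / 4)) ^ 2 * μ.toSphere.real (ball x (a / 4)) := by
        gcongr
        exact le_toSphere_real_ball μ x (by positivity) (by linarith)
    _ ≤ ∫ y, h y ^ 2 ∂μ.toSphere :=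
        sq_sub_mul_measureReal_ball_le_integral_sq hh hint x (by push_cast; linarith)

end Sphere

/-- There is a constant `C = C(n)` such that for any `1`-Lipschitz functions `f, g` on the unit
sphere `S^{n-1} ⊂ ℝ^n` with `|f|, |g| ≤ 1`, one has
`‖f - g‖_{C⁰} ≤ C ‖f - g‖_{L²}^{2/(n+1)}`. -/
theorem stmt3 (n : ℕ) (hn : 2 ≤ n) :
    ∃ C : ℝ, 0 < C ∧
      ∀ f g : (sphere (0 : EuclideanSpace ℝ (Fin n)) 1) → ℝ,
        LipschitzWith 1 f → LipschitzWith 1 g →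
        (∀ x, |f x| ≤ 1) → (∀ x, |g x| ≤ 1) →
        ∀ x, |f x - g x| ≤
          C * (∫ y, (f y - g y) ^ 2 ∂((volume : Measure (EuclideanSpace ℝ (Fin n))).toSphere))
              ^ ((1 : ℝ) / (n + 1)) := by
  have : Nontrivial (EuclideanSpace ℝ (Fin n)) :=
    Module.nontrivial_of_finrank_pos (R := ℝ) (by rw [finrank_euclideanSpace_fin]; omega)
  set c := volume.real (ball (0 : EuclideanSpace ℝ (Fin n)) 1) / 32 ^ n
  have hc : 0 < c :=
    div_pos (ENNReal.toReal_pos (measure_ball_pos _ _ one_pos).ne' measure_ball_lt_top.ne)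
      (by positivity)
  refine ⟨(1 / c) ^ ((1 : ℝ) / (n + 1)), by positivity, fun f g hf hg hf1 hg1 x ↦ ?_⟩
  have hfg : LipschitzWith 2 fun y ↦ f y - g y := by simpa [one_add_one_eq_two] using hf.sub hg
  have key := mul_abs_pow_le_integral_sq_toSphere volume hfg x
    (by linarith [abs_sub (f x) (g x), hf1 x, hg1 x])
  rw [finrank_euclideanSpace_fin] at key
  simpa using le_rpow_of_mul_pow_le (abs_nonneg _) hc n.succ_ne_zero key
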